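/- Let B be a real n×n matrix (n ≥ 2) with entries b_ij and eigenvalue multiset Λ over ℂ. Then there exists an eigenvalue λ₀ ∈ Λ with Re(λ₀) ≥ (1/n)·tr(B) + (1/(√n·√(n−1)))·√(F_diag + χ_off + h), where F_diag = ((n−1)/n)·Σ_i b_ii² − (2/n)·Σ_{i<j} b_ii·b_jj, χ_off = 2·Σ_{i<j} b_ij·b_ji, and h = Σ_{λ∈Λ} (Im λ)². -/

import Mathlib

open Finset Matrix Polynomial

/-!
Let `x₁, …, xₙ` be the real parts of the eigenvalues. Their sum is `tr B`; their sum of squares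
is `tr (B²) + h`, because `(Re λ)² = Re (λ²) + (Im λ)²` and the eigenvalues of `B²` are the
squares of those of `B` (from `det (z² - B²) = det (z - B) · det (z + B)`). Hence
`∑ (xᵢ - x̄)² = tr (B²) - (tr B)² / n + h`, and splitting both traces into diagonal and `i < j`
parts gives `tr (B²) - (tr B)² / n = F_diag + χ_off`. Samuelson's inequality
`max xᵢ ≥ x̄ + √(∑ (xᵢ - x̄)² / (n (n - 1)))` then yields the eigenvalue.
-/

namespace Matrix

variable {K ι : Type*} [Field K] [IsAlgClosed K] [Fintype ι] [DecidableEq ι]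

theorem card_roots_charpoly (A : Matrix ι ι K) :
    Multiset.card A.charpoly.roots = Fintype.card ι := by
  rw [splits_iff_card_roots.mp (IsAlgClosed.splits _), charpoly_natDegree_eq_dim]

theorem eval_charpoly_eq_prod_roots (A : Matrix ι ι K) (z : K) :
    A.charpoly.eval z = (A.charpoly.roots.map (z - ·)).prod :=
  (IsAlgClosed.splits _).eval_eq_prod_roots_of_monic A.charpoly_monic z

theorem det_scalar_add_eq_prod_roots (A : Matrix ι ι K) (z : K) :
    (scalar ι z + A).det = (A.charpoly.roots.map (z + ·)).prod := by
  have hneg : A.charpoly.roots.map (-z - ·) = (A.charpoly.roots.map (z + ·)).map Neg.neg := by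
    rw [Multiset.map_map]
    exact Multiset.map_congr rfl fun μ _ => by simp only [Function.comp_apply]; ring
  rw [← neg_neg (scalar ι z + A), neg_add, ← map_neg, ← sub_eq_add_neg, det_neg,
    ← eval_charpoly, eval_charpoly_eq_prod_roots, hneg, Multiset.prod_map_neg, Multiset.card_map,
    card_roots_charpoly, ← mul_assoc, ← mul_pow, neg_one_mul, neg_neg, one_pow, one_mul]

theorem charpoly_sq_eq_prod_roots (A : Matrix ι ι K) :
    (A ^ 2).charpoly = ((A.charpoly.roots.map (· ^ 2)).map fun μ => X - C μ).prod := by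
  refine Polynomial.funext fun w => ?_
  obtain ⟨z, rfl⟩ := IsAlgClosed.exists_eq_mul_self w
  have hcomm : A * scalar ι z = scalar ι z * A :=
    (scalar_commute z (fun _ => .all _ _) A).eq.symm
  have hfactor : scalar ι (z * z) - A ^ 2 = (scalar ι z - A) * (scalar ι z + A) := by
    rw [sq, map_mul, sub_mul, mul_add, mul_add, hcomm]
    abel
  rw [eval_charpoly, hfactor, det_mul, ← eval_charpoly, eval_charpoly_eq_prod_roots,
    det_scalar_add_eq_prod_roots, ← Multiset.prod_map_mul, eval_multiset_prod, Multiset.map_map,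
    Multiset.map_map]
  refine congrArg _ (Multiset.map_congr rfl fun μ _ => ?_)
  simp only [Function.comp_apply, eval_sub, eval_X, eval_C]
  ring

theorem trace_sq_eq_sum_sq_roots_charpoly (A : Matrix ι ι K) :
    (A ^ 2).trace = (A.charpoly.roots.map (· ^ 2)).sum := by
  rw [trace_eq_sum_roots_charpoly, charpoly_sq_eq_prod_roots, roots_multiset_prod_X_sub_C]

end Matrix

theorem Finset.sum_sum_eq_sum_add_two_mul_sum_lt {ι R : Type*} [Fintype ι] [LinearOrder ι]
    [NonAssocSemiring R] (g : ι → ι → R) (hg : ∀ i j, g i j = g j i) :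
    ∑ i, ∑ j, g i j = ∑ i, g i i + 2 * ∑ i, ∑ j ∈ univ.filter (fun j => i < j), g i j := by
  have hlower : ∑ i, ∑ j ∈ univ.filter (fun j => j < i), g i j
      = ∑ i, ∑ j ∈ univ.filter (fun j => i < j), g i j := by
    simp only [sum_filter]
    rw [sum_comm]
    simp only [hg]
  have hrow (i : ι) : ∑ j, g i j = ∑ j ∈ univ.filter (fun j => j < i), g i j + g i i
      + ∑ j ∈ univ.filter (fun j => i < j), g i j := by
    have htrichotomy (j : ι) : g i j = (if j < i then g i j else 0)
        + (if i = j then g i j else 0) + (if i < j then g i j else 0) := by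
      rcases lt_trichotomy j i with h | rfl | h
      · simp [h, h.ne', h.not_gt]
      · simp
      · simp [h, h.ne, h.not_gt]
    rw [sum_congr rfl fun j _ => htrichotomy j, sum_add_distrib, sum_add_distrib, sum_filter,
      sum_filter, sum_ite_eq]
    simp
  rw [sum_congr rfl fun i _ => hrow i, sum_add_distrib, sum_add_distrib, hlower, two_mul]
  abel

theorem Finset.sum_sub_mean_sq {ι K : Type*} [Field K] (s : Finset ι) (x : ι → K) :
    ∑ i ∈ s, (x i - (∑ j ∈ s, x j) / #s) ^ 2
      = ∑ i ∈ s, x i ^ 2 - (∑ i ∈ s, x i) ^ 2 / #s := by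
  by_cases hs : (#s : K) = 0
  · simp [hs]
  · simp only [sub_sq, sum_add_distrib, sum_sub_distrib, ← sum_mul, ← mul_sum, sum_const,
      nsmul_eq_mul]
    field_simp
    ring

namespace Matrix

variable {ι R : Type*} [Fintype ι] [LinearOrder ι] [CommSemiring R] (B : Matrix ι ι R)

theorem trace_sq_eq_sum_sq_add_two_mul_sum_lt :
    (B ^ 2).trace
      = ∑ i, B i i ^ 2 + 2 * ∑ i, ∑ j ∈ univ.filter (fun j => i < j), B i j * B j i := by
  have := sum_sum_eq_sum_add_two_mul_sum_lt (fun i j => B i j * B j i) fun i j => mul_comm _ _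
  simpa [sq, trace, mul_apply] using this

theorem sq_trace_eq_sum_sq_add_two_mul_sum_lt :
    B.trace ^ 2
      = ∑ i, B i i ^ 2 + 2 * ∑ i, ∑ j ∈ univ.filter (fun j => i < j), B i i * B j j := by
  have := sum_sum_eq_sum_add_two_mul_sum_lt (fun i j => B i i * B j j) fun i j => mul_comm _ _
  simpa [sq, trace, sum_mul_sum] using this

end Matrix

theorem Complex.re_multiset_sum (s : Multiset ℂ) : s.sum.re = (s.map Complex.re).sum :=
  map_multiset_sum Complex.reAddGroupHom s

namespace Matrix

variable {ι : Type*} [Fintype ι] [DecidableEq ι] (B : Matrix ι ι ℝ)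

theorem sum_re_roots_charpoly_map_ofReal :
    ((B.map (Complex.ofReal ·)).charpoly.roots.map Complex.re).sum = B.trace := by
  rw [← Complex.re_multiset_sum, ← trace_eq_sum_roots_charpoly]
  simp [trace]

theorem sum_re_sq_roots_charpoly_map_ofReal :
    ((B.map (Complex.ofReal ·)).charpoly.roots.map fun μ => μ.re ^ 2).sum
      = (B ^ 2).trace + ((B.map (Complex.ofReal ·)).charpoly.roots.map fun μ => μ.im ^ 2).sum := by
  have hsplit (s : Multiset ℂ) : (s.map fun μ => μ.re ^ 2).sum
      = ((s.map (· ^ 2)).map Complex.re).sum + (s.map fun μ => μ.im ^ 2).sum := by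
    rw [Multiset.map_map, ← Multiset.sum_map_add]
    exact congrArg _ (Multiset.map_congr rfl fun μ _ => by simp [sq])
  rw [hsplit, ← Complex.re_multiset_sum, ← trace_sq_eq_sum_sq_roots_charpoly]
  simp [trace, sq, mul_apply]

end Matrix

section Samuelson

variable {ι : Type*} [Fintype ι] {d : ι → ℝ}

theorem card_mul_sq_le_of_sum_eq_zero (hd : ∑ i, d i = 0) (j : ι) :
    Fintype.card ι * d j ^ 2 ≤ (Fintype.card ι - 1) * ∑ i, d i ^ 2 := by
  classical
  have hrest : ∑ i ∈ univ.erase j, d i = -d j := by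
    rw [sum_erase_eq_sub (mem_univ j), hd, zero_sub]
  have hcs := sq_sum_le_card_mul_sum_sq (s := univ.erase j) (f := d)
  rw [hrest, card_erase_of_mem (mem_univ j), sum_erase_eq_sub (mem_univ j), card_univ,
    Nat.cast_pred (Fintype.card_pos_iff.2 ⟨j⟩)] at hcs
  linarith

theorem sum_sq_le_card_mul_mul_neg_of_sum_eq_zero (hd : ∑ i, d i = 0) {m M : ℝ}
    (hm : ∀ i, m ≤ d i) (hM : ∀ i, d i ≤ M) : ∑ i, d i ^ 2 ≤ Fintype.card ι * M * -m := by
  have hprod : 0 ≤ ∑ i, (M - d i) * (d i - m) :=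
    sum_nonneg fun i _ => mul_nonneg (sub_nonneg.2 (hM i)) (sub_nonneg.2 (hm i))
  have hexpand : ∑ i, (M - d i) * (d i - m)
      = (M + m) * ∑ i, d i - Fintype.card ι * M * m - ∑ i, d i ^ 2 := by
    have hterm (i : ι) : (M - d i) * (d i - m) = (M + m) * d i - M * m - d i ^ 2 := by ring
    rw [sum_congr rfl fun i _ => hterm i, sum_sub_distrib, sum_sub_distrib, ← mul_sum, sum_const,
      card_univ, nsmul_eq_mul, mul_assoc]
  rw [hexpand, hd] at hprod
  linarith

theorem sum_sq_le_of_sum_eq_zero_of_forall_le (hd : ∑ i, d i = 0) {k : ι}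
    (hk : ∀ i, d i ≤ d k) : ∑ i, d i ^ 2 ≤ Fintype.card ι * (Fintype.card ι - 1) * d k ^ 2 := by
  have : Nonempty ι := ⟨k⟩
  obtain ⟨j, -, hj⟩ := exists_min_image univ d univ_nonempty
  have hupper := sum_sq_le_card_mul_mul_neg_of_sum_eq_zero hd (fun i => hj i (mem_univ i)) hk
  have hmin := card_mul_sq_le_of_sum_eq_zero hd j
  set S := ∑ i, d i ^ 2
  set n : ℝ := (Fintype.card ι : ℝ)
  have hn : 1 ≤ n := Nat.one_le_cast.2 Fintype.card_pos
  rcases le_or_gt S 0 with hS | hS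
  · exact hS.trans (mul_nonneg (mul_nonneg (by linarith) (by linarith)) (sq_nonneg _))
  · refine le_of_mul_le_mul_right ?_ hS
    calc S * S ≤ (n * d k * -d j) ^ 2 := by nlinarith
      _ = n * d k ^ 2 * (n * d j ^ 2) := by ring
      _ ≤ n * d k ^ 2 * ((n - 1) * S) := by gcongr
      _ = n * (n - 1) * d k ^ 2 * S := by ring

theorem Fintype.exists_mean_add_sqrt_le [Nonempty ι] (x : ι → ℝ) :
    ∃ k, (∑ i, x i) / card ι + 1 / (√(card ι) * √(card ι - 1))
      * √(∑ i, (x i - (∑ j, x j) / card ι) ^ 2) ≤ x k := by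
  set n : ℝ := (card ι : ℝ)
  set μ := (∑ j, x j) / n
  have hn : 1 ≤ n := Nat.one_le_cast.2 card_pos
  obtain ⟨k, -, hk⟩ := exists_max_image univ (fun i => x i - μ) univ_nonempty
  have hd : ∑ i, (x i - μ) = 0 := by
    rw [sum_sub_distrib, sum_const, card_univ, nsmul_eq_mul, mul_div_cancel₀ _ (by positivity),
      sub_self]
  have hbound := sum_sq_le_of_sum_eq_zero_of_forall_le hd fun i => hk i (mem_univ i)
  obtain ⟨i, -, hi⟩ := exists_le_of_sum_le univ_nonempty (f := 0) (g := fun i => x i - μ)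
    (by rw [hd]; simp)
  have hk_nonneg : 0 ≤ x k - μ := hi.trans (hk i (mem_univ i))
  refine ⟨k, ?_⟩
  calc μ + 1 / (√n * √(n - 1)) * √(∑ i, (x i - μ) ^ 2)
      = μ + √((∑ i, (x i - μ) ^ 2) / (n * (n - 1))) := by
        rw [Real.sqrt_div' _ (by nlinarith), Real.sqrt_mul (by linarith)]
        ring
    _ ≤ μ + √((x k - μ) ^ 2) := by
        gcongr
        exact div_le_of_le_mul₀ (by nlinarith) (sq_nonneg _) (by linarith)
    _ = x k := by rw [Real.sqrt_sq hk_nonneg]; ring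

end Samuelson

theorem Multiset.exists_mean_add_sqrt_le (s : Multiset ℝ) (hs : s ≠ 0) :
    ∃ x ∈ s, s.sum / card s + 1 / (√(card s) * √(card s - 1))
      * √((s.map (· ^ 2)).sum - s.sum ^ 2 / card s) ≤ x := by
  classical
  have : Nonempty s := by simpa [← Fintype.card_pos_iff, Multiset.card_pos] using hs
  have hsum (f : ℝ → ℝ) : ∑ x : s, f x = (s.map f).sum := by
    rw [sum_eq_multiset_sum, Multiset.map_univ]
  obtain ⟨k, hk⟩ := Fintype.exists_mean_add_sqrt_le fun x : s => (x : ℝ)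
  rw [← card_univ, sum_sub_mean_sq, card_univ, Multiset.card_coe, ← Multiset.sum_eq_sum_coe,
    hsum (· ^ 2)] at hk
  exact ⟨k, Multiset.coe_mem, hk⟩

/-- Lower eigenvalue bound: some eigenvalue of a real matrix `B` has real part at least
`tr(B)/n + (1/(√n·√(n−1)))·√(F_diag + χ_off + h)`. -/
theorem eigenvalue_re_lower_bound (n : ℕ) (hn : 2 ≤ n) (B : Matrix (Fin n) (Fin n) ℝ)
    (Λ : Multiset ℂ)
    (hΛ : Λ = (Matrix.charpoly (B.map (Complex.ofReal ·))).roots)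
    (Fdiag χoff h : ℝ)
    (hF : Fdiag = ((n - 1 : ℝ) / n) * ∑ i, (B i i) ^ 2
        - (2 / (n : ℝ)) * ∑ i, ∑ j ∈ Finset.univ.filter (fun j => i < j), B i i * B j j)
    (hχ : χoff = 2 * ∑ i, ∑ j ∈ Finset.univ.filter (fun j => i < j), B i j * B j i)
    (hh : h = (Λ.map (fun lam => lam.im ^ 2)).sum) :
    ∃ lam0 ∈ Λ, lam0.re ≥ Matrix.trace B / n
      + (1 / (Real.sqrt n * Real.sqrt (n - 1))) * Real.sqrt (Fdiag + χoff + h) := by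
  have hcard : Multiset.card (Λ.map Complex.re) = n := by
    rw [Multiset.card_map, hΛ, card_roots_charpoly, Fintype.card_fin]
  have hvar : (B ^ 2).trace - B.trace ^ 2 / n = Fdiag + χoff := by
    rw [hF, hχ, trace_sq_eq_sum_sq_add_two_mul_sum_lt, sq_trace_eq_sum_sq_add_two_mul_sum_lt]
    field_simp
    ring
  obtain ⟨_, hx, hk⟩ := (Λ.map Complex.re).exists_mean_add_sqrt_le
    (by rw [← Multiset.card_pos, hcard]; omega)
  obtain ⟨μ, hμ, rfl⟩ := Multiset.mem_map.1 hx
  rw [hcard, Multiset.map_map, Function.comp_def, hΛ, sum_re_roots_charpoly_map_ofReal,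
    sum_re_sq_roots_charpoly_map_ofReal, ← hΛ, ← hh, add_sub_right_comm, hvar] at hk
  exact ⟨μ, hμ, hk⟩
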